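/- For a finite family of contraction maps w₁,…,wₙ on a complete nonempty metric space X, there exists a unique nonempty compact set A ⊆ X such that A = w₁(A) ∪ ⋯ ∪ wₙ(A). -/

import Mathlib

/-!
The Hutchinson operator `A ↦ ⋃ i, w i '' A` maps nonempty compact sets to nonempty compact sets.
A map that is `K`-Lipschitz moves Hausdorff distances by at most the factor `K`, and the Hausdorff
distance of two unions is at most the largest distance of corresponding pieces, so the operator is
a contraction with the largest of the finitely many Lipschitz constants. The nonempty compact sets
form a complete metric space under the Hausdorff distance, and the attractor is the unique fixed
point given by the Banach fixed point theorem.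
-/

open Metric TopologicalSpace

section LipschitzImage

variable {X Y : Type*} [PseudoEMetricSpace X] [PseudoEMetricSpace Y] {K : NNReal} {f : X → Y}

theorem LipschitzWith.infEDist_image_le (hf : LipschitzWith K f) (x : X) {t : Set X}
    (ht : t.Nonempty) : infEDist (f x) (f '' t) ≤ K * infEDist x t := by
  have : Nonempty t := ht.to_subtype
  calc infEDist (f x) (f '' t) = ⨅ y : t, edist (f x) (f y) := by
        rw [infEDist, iInf_image, iInf_subtype']
    _ ≤ ⨅ y : t, K * edist x y := iInf_mono fun y => hf x y
    _ = K * infEDist x t := by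
        rw [infEDist, iInf_subtype', ENNReal.mul_iInf (by simp)]

theorem LipschitzWith.hausdorffEDist_image_le (hf : LipschitzWith K f) {s t : Set X}
    (hs : s.Nonempty) (ht : t.Nonempty) :
    hausdorffEDist (f '' s) (f '' t) ≤ K * hausdorffEDist s t := by
  refine hausdorffEDist_le_of_infEDist ?_ ?_ <;> rintro _ ⟨x, hx, rfl⟩
  · refine (hf.infEDist_image_le x ht).trans ?_
    gcongr
    exact infEDist_le_hausdorffEDist_of_mem hx
  · refine (hf.infEDist_image_le x hs).trans ?_
    rw [hausdorffEDist_comm]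
    gcongr
    exact infEDist_le_hausdorffEDist_of_mem hx

end LipschitzImage

theorem exists_lt_one_forall_lipschitzWith {ι X Y : Type*} [Finite ι] [PseudoEMetricSpace X]
    [PseudoEMetricSpace Y] {w : ι → X → Y} (hw : ∀ i, ∃ K : NNReal, K < 1 ∧ LipschitzWith K (w i)) :
    ∃ K : NNReal, K < 1 ∧ ∀ i, LipschitzWith K (w i) := by
  choose K hK1 hK using hw
  have := Fintype.ofFinite ι
  exact ⟨Finset.univ.sup K, (Finset.sup_lt_iff zero_lt_one).2 fun i _ => hK1 i,
    fun i => (hK i).weaken (Finset.le_sup (Finset.mem_univ i))⟩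

namespace TopologicalSpace.NonemptyCompacts

variable {ι X : Type*} [Finite ι] [Nonempty ι]

def hutchinson [TopologicalSpace X] (w : ι → X → X) (hw : ∀ i, Continuous (w i))
    (A : NonemptyCompacts X) : NonemptyCompacts X where
  carrier := ⋃ i, w i '' A
  isCompact' := isCompact_iUnion fun i => A.isCompact.image (hw i)
  nonempty' := Set.nonempty_iUnion.2 ⟨Classical.arbitrary ι, A.nonempty.image _⟩

theorem lipschitzWith_hutchinson [EMetricSpace X] {K : NNReal} {w : ι → X → X}
    (hw : ∀ i, LipschitzWith K (w i)) :
    LipschitzWith K (hutchinson w fun i => (hw i).continuous) := fun A B =>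
  calc hausdorffEDist (⋃ i, w i '' A) (⋃ i, w i '' B)
      ≤ ⨆ i, hausdorffEDist (w i '' A) (w i '' B) := hausdorffEDist_iUnion_le
    _ ≤ K * hausdorffEDist (A : Set X) B :=
        iSup_le fun i => (hw i).hausdorffEDist_image_le A.nonempty B.nonempty

end TopologicalSpace.NonemptyCompacts

/-- Hutchinson's theorem: a finite family of contractions on a complete nonempty
metric space has a unique nonempty compact invariant set (the attractor). -/
theorem hutchinson_attractor_exists_unique
    {X : Type*} [MetricSpace X] [CompleteSpace X] [Nonempty X]
    (n : ℕ) (hn : 0 < n) (w : Fin n → X → X)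
    (hw : ∀ i, ∃ K : NNReal, K < 1 ∧ LipschitzWith K (w i)) :
    ∃! A : Set X, A.Nonempty ∧ IsCompact A ∧ A = ⋃ i, w i '' A := by
  have : Nonempty (Fin n) := ⟨⟨0, hn⟩⟩
  obtain ⟨K, hK1, hK⟩ := exists_lt_one_forall_lipschitzWith hw
  set F := NonemptyCompacts.hutchinson w fun i => (hK i).continuous
  have hF : ContractingWith K F := ⟨hK1, NonemptyCompacts.lipschitzWith_hutchinson hK⟩
  set A := ContractingWith.fixedPoint F hF
  refine ⟨A, ⟨A.nonempty, A.isCompact, (congrArg SetLike.coe hF.fixedPoint_isFixedPt).symm⟩, ?_⟩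
  rintro B ⟨hB, hBc, hBA⟩
  have hBF : Function.IsFixedPt F ⟨⟨B, hBc⟩, hB⟩ := NonemptyCompacts.ext hBA.symm
  exact congrArg SetLike.coe (hF.fixedPoint_unique hBF)
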